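/- Let φ : ℝ² → ℝ be smooth with φ_xx + φ_yy = -exp(2φ). Define β = φ_y, γ = φ_x, V = (1/2)φ_x² - φ_y² - exp(2φ), W = (1/2)φ_y² - φ_x² - exp(2φ). Then β_x = γ_y and (β, γ, V, W) satisfies the projective Gauss–Codazzi equations β_yyy - 2β_y W - β W_y = γ_xxx - 2γ_x V - γ V_x, W_x = 2γ β_y + β γ_y, V_y = 2β γ_x + γ β_x. -/

import Mathlib

/-- Partial derivative in the first variable. -/
noncomputable def pdx {E : Type*} [NormedAddCommGroup E] [NormedSpace ℝ E]
    (f : ℝ → ℝ → E) : ℝ → ℝ → E := fun x y => deriv (fun t => f t y) x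

/-- Partial derivative in the second variable. -/
noncomputable def pdy {E : Type*} [NormedAddCommGroup E] [NormedSpace ℝ E]
    (f : ℝ → ℝ → E) : ℝ → ℝ → E := fun x y => deriv (fun t => f x t) y

open Function

lemma pdx_congr {f g : ℝ → ℝ → ℝ} (h : ∀ x y, f x y = g x y) :
    ∀ x y, pdx f x y = pdx g x y := by
  intro x y
  simp only [pdx]
  congr 1
  funext t
  exact h t y

lemma pdy_congr {f g : ℝ → ℝ → ℝ} (h : ∀ x y, f x y = g x y) :
    ∀ x y, pdy f x y = pdy g x y := by
  intro x y
  simp only [pdy]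
  congr 1
  funext t
  exact h x t

lemma hasDerivAt_pdx (f : ℝ → ℝ → ℝ) (hf : ContDiff ℝ (⊤ : ℕ∞) (uncurry f)) (x y : ℝ) :
    HasDerivAt (fun t => f t y) (pdx f x y) x := by
  have hd : DifferentiableAt ℝ (fun t => f t y) x := by
    have he : (fun t => f t y) = uncurry f ∘ (fun t => (t, y)) := rfl
    rw [he]
    exact (hf.differentiable (by simp) (x, y)).comp x
      (differentiableAt_id.prodMk (differentiableAt_const y))
  exact hd.hasDerivAt

lemma hasDerivAt_pdy (f : ℝ → ℝ → ℝ) (hf : ContDiff ℝ (⊤ : ℕ∞) (uncurry f)) (x y : ℝ) :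
    HasDerivAt (fun t => f x t) (pdy f x y) y := by
  have hd : DifferentiableAt ℝ (fun t => f x t) y := by
    have he : (fun t => f x t) = uncurry f ∘ (fun t => (x, t)) := rfl
    rw [he]
    exact (hf.differentiable (by simp) (x, y)).comp y
      ((differentiableAt_const x).prodMk differentiableAt_id)
  exact hd.hasDerivAt

lemma pdx_eq_fderiv (f : ℝ → ℝ → ℝ) (hf : ContDiff ℝ (⊤ : ℕ∞) (uncurry f)) (x y : ℝ) :
    pdx f x y = fderiv ℝ (uncurry f) (x, y) (1, 0) := by
  have h1 : HasFDerivAt (uncurry f) (fderiv ℝ (uncurry f) (x, y)) (x, y) :=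
    (hf.differentiable (by simp) (x, y)).hasFDerivAt
  have h2 : HasDerivAt (fun t : ℝ => ((t, y) : ℝ × ℝ)) (1, 0) x :=
    (hasDerivAt_id x).prodMk (hasDerivAt_const x y)
  have h3 : HasDerivAt (fun t => f t y) (fderiv ℝ (uncurry f) (x, y) (1, 0)) x :=
    by have := h1.comp_hasDerivAt x h2; exact this
  exact (hasDerivAt_pdx f hf x y).unique h3

lemma pdy_eq_fderiv (f : ℝ → ℝ → ℝ) (hf : ContDiff ℝ (⊤ : ℕ∞) (uncurry f)) (x y : ℝ) :
    pdy f x y = fderiv ℝ (uncurry f) (x, y) (0, 1) := by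
  have h1 : HasFDerivAt (uncurry f) (fderiv ℝ (uncurry f) (x, y)) (x, y) :=
    (hf.differentiable (by simp) (x, y)).hasFDerivAt
  have h2 : HasDerivAt (fun t : ℝ => ((x, t) : ℝ × ℝ)) (0, 1) y :=
    (hasDerivAt_const y x).prodMk (hasDerivAt_id y)
  have h3 : HasDerivAt (fun t => f x t) (fderiv ℝ (uncurry f) (x, y) (0, 1)) y :=
    h1.comp_hasDerivAt y h2
  exact (hasDerivAt_pdy f hf x y).unique h3

lemma contDiff_uncurry_pdx (f : ℝ → ℝ → ℝ) (hf : ContDiff ℝ (⊤ : ℕ∞) (uncurry f)) :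
    ContDiff ℝ (⊤ : ℕ∞) (uncurry (pdx f)) := by
  have he : uncurry (pdx f) = fun p : ℝ × ℝ => fderiv ℝ (uncurry f) p (((1 : ℝ), (0 : ℝ))) := by
    funext p
    exact pdx_eq_fderiv f hf p.1 p.2
  rw [he]
  exact (ContinuousLinearMap.apply ℝ ℝ (((1 : ℝ), (0 : ℝ)))).contDiff.comp
    (hf.fderiv_right (by simp))

lemma contDiff_uncurry_pdy (f : ℝ → ℝ → ℝ) (hf : ContDiff ℝ (⊤ : ℕ∞) (uncurry f)) :
    ContDiff ℝ (⊤ : ℕ∞) (uncurry (pdy f)) := by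
  have he : uncurry (pdy f) = fun p : ℝ × ℝ => fderiv ℝ (uncurry f) p (((0 : ℝ), (1 : ℝ))) := by
    funext p
    exact pdy_eq_fderiv f hf p.1 p.2
  rw [he]
  exact (ContinuousLinearMap.apply ℝ ℝ (((0 : ℝ), (1 : ℝ)))).contDiff.comp
    (hf.fderiv_right (by simp))

lemma pdx_pdy_comm (f : ℝ → ℝ → ℝ) (hf : ContDiff ℝ (⊤ : ℕ∞) (uncurry f)) :
    ∀ x y, pdx (pdy f) x y = pdy (pdx f) x y := by
  intro x y
  have hd1 : ∀ p, HasFDerivAt (uncurry f) (fderiv ℝ (uncurry f) p) p := fun p =>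
    (hf.differentiable (by simp) p).hasFDerivAt
  have hd2 : HasFDerivAt (fderiv ℝ (uncurry f))
      (fderiv ℝ (fderiv ℝ (uncurry f)) (x, y)) (x, y) :=
    (((hf.fderiv_right (m := 1) (WithTop.coe_le_coe.mpr le_top)).differentiable one_ne_zero) (x, y)).hasFDerivAt
  have key : ∀ v w : ℝ × ℝ,
      fderiv ℝ (fun p => fderiv ℝ (uncurry f) p v) (x, y) w
        = fderiv ℝ (fderiv ℝ (uncurry f)) (x, y) w v := by
    intro v w
    have h : HasFDerivAt (fun p => fderiv ℝ (uncurry f) p v)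
        ((ContinuousLinearMap.apply ℝ ℝ v).comp (fderiv ℝ (fderiv ℝ (uncurry f)) (x, y)))
        (x, y) := (ContinuousLinearMap.apply ℝ ℝ v).hasFDerivAt.comp (x, y) hd2
    rw [h.fderiv]
    rfl
  have e1 : pdx (pdy f) x y
      = fderiv ℝ (fderiv ℝ (uncurry f)) (x, y) (((1 : ℝ), (0 : ℝ))) (((0 : ℝ), (1 : ℝ))) := by
    have := pdx_eq_fderiv (pdy f) (contDiff_uncurry_pdy f hf) x y
    rw [this]
    have he : uncurry (pdy f) = fun p : ℝ × ℝ => fderiv ℝ (uncurry f) p (((0 : ℝ), (1 : ℝ))) := by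
      funext p
      exact pdy_eq_fderiv f hf p.1 p.2
    rw [he, key]
  have e2 : pdy (pdx f) x y
      = fderiv ℝ (fderiv ℝ (uncurry f)) (x, y) (((0 : ℝ), (1 : ℝ))) (((1 : ℝ), (0 : ℝ))) := by
    have := pdy_eq_fderiv (pdx f) (contDiff_uncurry_pdx f hf) x y
    rw [this]
    have he : uncurry (pdx f) = fun p : ℝ × ℝ => fderiv ℝ (uncurry f) p (((1 : ℝ), (0 : ℝ))) := by
      funext p
      exact pdx_eq_fderiv f hf p.1 p.2
    rw [he, key]
  rw [e1, e2]
  exact second_derivative_symmetric hd1 hd2 _ _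

theorem minimal_surfaces_Jonas
    (φ : ℝ → ℝ → ℝ) (hφ : ContDiff ℝ (⊤ : ℕ∞) (Function.uncurry φ))
    (hpde : ∀ x y, pdx (pdx φ) x y + pdy (pdy φ) x y = -Real.exp (2 * φ x y))
    (β γ V W : ℝ → ℝ → ℝ)
    (hβ : ∀ x y, β x y = pdy φ x y)
    (hγ : ∀ x y, γ x y = pdx φ x y)
    (hV : ∀ x y, V x y = (1/2) * (pdx φ x y)^2 - (pdy φ x y)^2 - Real.exp (2 * φ x y))
    (hW : ∀ x y, W x y = (1/2) * (pdy φ x y)^2 - (pdx φ x y)^2 - Real.exp (2 * φ x y)) :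
    (∀ x y, pdx β x y = pdy γ x y) ∧
    (∀ x y, pdy (pdy (pdy β)) x y - 2 * pdy β x y * W x y - β x y * pdy W x y
        = pdx (pdx (pdx γ)) x y - 2 * pdx γ x y * V x y - γ x y * pdx V x y) ∧
    (∀ x y, pdx W x y = 2 * γ x y * pdy β x y + β x y * pdy γ x y) ∧
    (∀ x y, pdy V x y = 2 * β x y * pdx γ x y + γ x y * pdx β x y) := by
  have Cp : ContDiff ℝ (⊤ : ℕ∞) (uncurry (pdx φ)) := contDiff_uncurry_pdx φ hφ
  have Cq : ContDiff ℝ (⊤ : ℕ∞) (uncurry (pdy φ)) := contDiff_uncurry_pdy φ hφ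
  have Cxx : ContDiff ℝ (⊤ : ℕ∞) (uncurry (pdx (pdx φ))) := contDiff_uncurry_pdx _ Cp
  have Cc : ContDiff ℝ (⊤ : ℕ∞) (uncurry (pdx (pdy φ))) := contDiff_uncurry_pdx _ Cq
  have Cxxx : ContDiff ℝ (⊤ : ℕ∞) (uncurry (pdx (pdx (pdx φ)))) := contDiff_uncurry_pdx _ Cxx
  have Cyxx : ContDiff ℝ (⊤ : ℕ∞) (uncurry (pdy (pdx (pdx φ)))) := contDiff_uncurry_pdy _ Cxx
  have c1' : ∀ x y, pdy (pdx φ) x y = pdx (pdy φ) x y :=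
    fun x y => (pdx_pdy_comm φ hφ x y).symm
  have hpde' : ∀ x y, pdy (pdy φ) x y = -(pdx (pdx φ) x y) - Real.exp (2 * φ x y) := by
    intro x y
    linarith [hpde x y]
  have hW2 : ∀ x y, W x y = (1/2) * (pdy φ x y * pdy φ x y)
      - pdx φ x y * pdx φ x y - Real.exp (2 * φ x y) := by
    intro x y
    rw [hW x y]
    ring
  have hV2 : ∀ x y, V x y = (1/2) * (pdx φ x y * pdx φ x y)
      - pdy φ x y * pdy φ x y - Real.exp (2 * φ x y) := by
    intro x y
    rw [hV x y]
    ring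
  -- first derivatives of W and V
  have hWx : ∀ x y, pdx W x y = pdy φ x y * pdx (pdy φ) x y
      - 2 * pdx φ x y * pdx (pdx φ) x y - 2 * pdx φ x y * Real.exp (2 * φ x y) := by
    intro x y
    rw [pdx_congr hW2 x y]
    have hd := ((((hasDerivAt_pdx (pdy φ) Cq x y).mul (hasDerivAt_pdx (pdy φ) Cq x y)).const_mul
      ((1:ℝ)/2)).sub ((hasDerivAt_pdx (pdx φ) Cp x y).mul (hasDerivAt_pdx (pdx φ) Cp x y))).sub
      (((hasDerivAt_pdx φ hφ x y).const_mul 2).exp)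
    exact hd.deriv.trans (by ring)
  have hWy : ∀ x y, pdy W x y = pdy φ x y * pdy (pdy φ) x y
      - 2 * pdx φ x y * pdy (pdx φ) x y - 2 * pdy φ x y * Real.exp (2 * φ x y) := by
    intro x y
    rw [pdy_congr hW2 x y]
    have hd := ((((hasDerivAt_pdy (pdy φ) Cq x y).mul (hasDerivAt_pdy (pdy φ) Cq x y)).const_mul
      ((1:ℝ)/2)).sub ((hasDerivAt_pdy (pdx φ) Cp x y).mul (hasDerivAt_pdy (pdx φ) Cp x y))).sub
      (((hasDerivAt_pdy φ hφ x y).const_mul 2).exp)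
    exact hd.deriv.trans (by ring)
  have hVx : ∀ x y, pdx V x y = pdx φ x y * pdx (pdx φ) x y
      - 2 * pdy φ x y * pdx (pdy φ) x y - 2 * pdx φ x y * Real.exp (2 * φ x y) := by
    intro x y
    rw [pdx_congr hV2 x y]
    have hd := ((((hasDerivAt_pdx (pdx φ) Cp x y).mul (hasDerivAt_pdx (pdx φ) Cp x y)).const_mul
      ((1:ℝ)/2)).sub ((hasDerivAt_pdx (pdy φ) Cq x y).mul (hasDerivAt_pdx (pdy φ) Cq x y))).sub
      (((hasDerivAt_pdx φ hφ x y).const_mul 2).exp)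
    exact hd.deriv.trans (by ring)
  have hVy : ∀ x y, pdy V x y = pdx φ x y * pdy (pdx φ) x y
      - 2 * pdy φ x y * pdy (pdy φ) x y - 2 * pdy φ x y * Real.exp (2 * φ x y) := by
    intro x y
    rw [pdy_congr hV2 x y]
    have hd := ((((hasDerivAt_pdy (pdx φ) Cp x y).mul (hasDerivAt_pdy (pdx φ) Cp x y)).const_mul
      ((1:ℝ)/2)).sub ((hasDerivAt_pdy (pdy φ) Cq x y).mul (hasDerivAt_pdy (pdy φ) Cq x y))).sub
      (((hasDerivAt_pdy φ hφ x y).const_mul 2).exp)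
    exact hd.deriv.trans (by ring)
  -- x-derivatives of the PDE
  have A : ∀ x y, pdx (pdy (pdy φ)) x y
      = -(pdx (pdx (pdx φ)) x y) - 2 * pdx φ x y * Real.exp (2 * φ x y) := by
    intro x y
    rw [pdx_congr hpde' x y]
    have hd := ((hasDerivAt_pdx (pdx (pdx φ)) Cxx x y).neg).sub
      (((hasDerivAt_pdx φ hφ x y).const_mul 2).exp)
    exact hd.deriv.trans (by ring)
  have B : ∀ x y, pdx (pdx (pdy (pdy φ))) x y
      = -(pdx (pdx (pdx (pdx φ))) x y) - 2 * pdx (pdx φ) x y * Real.exp (2 * φ x y)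
        - 4 * (pdx φ x y * pdx φ x y) * Real.exp (2 * φ x y) := by
    intro x y
    rw [pdx_congr A x y]
    have hd := ((hasDerivAt_pdx (pdx (pdx (pdx φ))) Cxxx x y).neg).sub
      ((((hasDerivAt_pdx (pdx φ) Cp x y).const_mul 2).mul
        (((hasDerivAt_pdx φ hφ x y).const_mul 2).exp)))
    exact hd.deriv.trans (by ring)
  -- y-derivatives of the PDE
  have G1 : ∀ x y, pdy (pdy (pdy φ)) x y
      = -(pdy (pdx (pdx φ)) x y) - 2 * pdy φ x y * Real.exp (2 * φ x y) := by
    intro x y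
    rw [pdy_congr hpde' x y]
    have hd := ((hasDerivAt_pdy (pdx (pdx φ)) Cxx x y).neg).sub
      (((hasDerivAt_pdy φ hφ x y).const_mul 2).exp)
    exact hd.deriv.trans (by ring)
  have G2 : ∀ x y, pdy (pdy (pdy (pdy φ))) x y
      = -(pdy (pdy (pdx (pdx φ))) x y) - 2 * pdy (pdy φ) x y * Real.exp (2 * φ x y)
        - 4 * (pdy φ x y * pdy φ x y) * Real.exp (2 * φ x y) := by
    intro x y
    rw [pdy_congr G1 x y]
    have hd := ((hasDerivAt_pdy (pdy (pdx (pdx φ))) Cyxx x y).neg).sub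
      ((((hasDerivAt_pdy (pdy φ) Cq x y).const_mul 2).mul
        (((hasDerivAt_pdy φ hφ x y).const_mul 2).exp)))
    exact hd.deriv.trans (by ring)
  -- equality of mixed fourth-order partials
  have t1 : ∀ x y, pdy (pdx (pdx φ)) x y = pdx (pdx (pdy φ)) x y :=
    fun x y => ((pdx_pdy_comm (pdx φ) Cp x y).symm).trans (pdx_congr c1' x y)
  have t2 : ∀ x y, pdy (pdx (pdy φ)) x y = pdx (pdy (pdy φ)) x y :=
    fun x y => (pdx_pdy_comm (pdy φ) Cq x y).symm
  have E0 : ∀ x y, pdy (pdy (pdx (pdx φ))) x y = pdx (pdx (pdy (pdy φ))) x y :=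
    fun x y => ((pdy_congr t1 x y).trans ((pdx_pdy_comm (pdx (pdy φ)) Cc x y).symm)).trans
      (pdx_congr t2 x y)
  -- reductions for β and γ
  have hb1 : ∀ x y, pdy β x y = pdy (pdy φ) x y := pdy_congr hβ
  have hb2 : ∀ x y, pdy (pdy β) x y = pdy (pdy (pdy φ)) x y := pdy_congr hb1
  have hb3 : ∀ x y, pdy (pdy (pdy β)) x y = pdy (pdy (pdy (pdy φ))) x y := pdy_congr hb2
  have hg1 : ∀ x y, pdx γ x y = pdx (pdx φ) x y := pdx_congr hγ
  have hg2 : ∀ x y, pdx (pdx γ) x y = pdx (pdx (pdx φ)) x y := pdx_congr hg1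
  have hg3 : ∀ x y, pdx (pdx (pdx γ)) x y = pdx (pdx (pdx (pdx φ))) x y := pdx_congr hg2
  refine ⟨?_, ?_, ?_, ?_⟩
  · intro x y
    rw [pdx_congr hβ x y, pdy_congr hγ x y]
    exact pdx_pdy_comm φ hφ x y
  · intro x y
    rw [hb3 x y, G2 x y, E0 x y, B x y, hg3 x y, hb1 x y, hg1 x y, hWy x y, hVx x y,
      hβ x y, hγ x y, hV x y, hW x y, c1' x y, hpde' x y]
    ring
  · intro x y
    rw [hWx x y, hb1 x y, pdy_congr hγ x y, hβ x y, hγ x y, c1' x y, hpde' x y]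
    ring
  · intro x y
    rw [hVy x y, hg1 x y, pdx_congr hβ x y, hβ x y, hγ x y, c1' x y, hpde' x y]
    ring
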